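/- Let p be an odd prime with p ∤ Q·D, where D = P² − 4Q, and let z = z_U(p) be the least n ≥ 1 with p | U_n(P,Q) (which exists). Then for all n ≥ 1: v_p(U_n) = 0 if z ∤ n; v_p(U_n) = v_p(U_z) if z | n and p ∤ n; and v_p(U_n) = v_p(U_{pz}) + v_p(n) − 1 if z | n and p | n. -/

import Mathlib

def lucasU (P Q : ℤ) : ℕ → ℤ
  | 0 => 0
  | 1 => 1
  | (n + 2) => P * lucasU P Q (n + 1) - Q * lucasU P Q n

def lucasV (P Q : ℤ) (n : ℕ) : ℤ := 2 * lucasU P Q (n + 1) - P * lucasU P Q n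

lemma lucasU_rec (P Q : ℤ) (n : ℕ) :
    lucasU P Q (n + 2) = P * lucasU P Q (n + 1) - Q * lucasU P Q n := rfl

lemma lucasV_rec (P Q : ℤ) (n : ℕ) :
    lucasV P Q (n + 2) = P * lucasV P Q (n + 1) - Q * lucasV P Q n := by
  simp only [lucasV, lucasU_rec P Q (n + 1), lucasU_rec P Q n]
  ring

lemma lucasU_add (P Q : ℤ) (a b : ℕ) :
    2 * lucasU P Q (a + b) = lucasU P Q a * lucasV P Q b + lucasV P Q a * lucasU P Q b ∧
    2 * lucasV P Q (a + b) = lucasV P Q a * lucasV P Q b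
      + (P ^ 2 - 4 * Q) * (lucasU P Q a * lucasU P Q b) := by
  induction a using Nat.twoStepInduction with
  | zero =>
    simp only [Nat.zero_add]
    constructor <;> · simp only [lucasV, lucasU]; ring
  | one =>
    have hb2 := lucasU_rec P Q b
    constructor <;>
    · simp only [Nat.add_comm 1 b, lucasV, lucasU, lucasU_rec]
      ring
  | more a ih1 ih2 =>
    obtain ⟨h1, h2⟩ := ih1
    obtain ⟨h3, h4⟩ := ih2
    have e1 : a + 2 + b = (a + b) + 2 := by omega
    have e2 : a + 1 + b = (a + b) + 1 := by omega
    rw [e2] at h3 h4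
    rw [e1, lucasU_rec P Q (a + b), lucasV_rec P Q (a + b), lucasU_rec P Q a, lucasV_rec P Q a]
    constructor
    · linear_combination P * h3 - Q * h1
    · linear_combination P * h4 - Q * h2

lemma lucasV_sq (P Q : ℤ) (n : ℕ) :
    lucasV P Q n ^ 2 = (P ^ 2 - 4 * Q) * lucasU P Q n ^ 2 + 4 * Q ^ n := by
  induction n with
  | zero => simp [lucasV, lucasU]
  | succ n ih =>
    have h1 : 2 * lucasU P Q (n + 1) = lucasV P Q n + P * lucasU P Q n := by
      simp only [lucasV]; ring
    have h2 : 2 * lucasV P Q (n + 1) = P * lucasV P Q n + (P ^ 2 - 4 * Q) * lucasU P Q n := by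
      simp only [lucasV, lucasU_rec]; ring
    have h4 : 4 * (lucasV P Q (n + 1) ^ 2) =
        4 * ((P ^ 2 - 4 * Q) * lucasU P Q (n + 1) ^ 2 + 4 * Q ^ (n + 1)) := by
      linear_combination (2 * lucasV P Q (n + 1) + P * lucasV P Q n
          + (P ^ 2 - 4 * Q) * lucasU P Q n) * h2
        - (P ^ 2 - 4 * Q) * (2 * lucasU P Q (n + 1) + lucasV P Q n + P * lucasU P Q n) * h1
        + 4 * Q * ih
    linarith

lemma lucasU_claim (P Q : ℤ) (m : ℕ) (k : ℕ) : ∃ C B : ℤ,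
    lucasV P Q m ^ 3 * 2 ^ k * lucasU P Q ((k + 1) * m)
      = ((k : ℤ) + 1) * lucasV P Q m ^ (k + 3) * lucasU P Q m + lucasU P Q m ^ 3 * C ∧
    lucasV P Q m ^ 3 * 2 ^ k * lucasV P Q ((k + 1) * m)
      = lucasV P Q m ^ (k + 4) + lucasU P Q m ^ 2 * B := by
  set U := lucasU P Q m with hU
  set V := lucasV P Q m with hV
  induction k with
  | zero =>
    refine ⟨0, 0, ?_, ?_⟩ <;> · simp only [Nat.one_mul, pow_zero, hU, hV] <;> ring
  | succ k ih =>
    obtain ⟨C, B, hu, hv⟩ := ih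
    have hadd := lucasU_add P Q ((k + 1) * m) m
    have e1 : (k + 2) * m = (k + 1) * m + m := by ring
    refine ⟨C * V + B, B * V + ((k : ℤ) + 1) * (P ^ 2 - 4 * Q) * V ^ (k + 3)
      + (P ^ 2 - 4 * Q) * C * U ^ 2, ?_, ?_⟩
    · rw [e1]
      push_cast
      linear_combination (V ^ 3 * 2 ^ k) * hadd.1 + V * hu + U * hv
    · rw [e1]
      push_cast
      linear_combination (V ^ 3 * 2 ^ k) * hadd.2 + V * hv + (P ^ 2 - 4 * Q) * U * hu
lemma lucas_rank (p : ℕ) (hp : p.Prime) (hodd : Odd p) (P Q : ℤ)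
    (hQ : ¬ (p : ℤ) ∣ Q) (hD : ¬ (p : ℤ) ∣ (P ^ 2 - 4 * Q)) (z : ℕ)
    (hz : IsLeast {n : ℕ | 1 ≤ n ∧ (p : ℤ) ∣ lucasU P Q n} z) :
    (∀ n : ℕ, (p : ℤ) ∣ lucasU P Q n ↔ z ∣ n) ∧ ¬ p ∣ z := by
  haveI : Fact p.Prime := ⟨hp⟩
  set K := AlgebraicClosure (ZMod p) with hK
  haveI : CharP K p := charP_of_injective_algebraMap (algebraMap (ZMod p) K).injective p
  obtain ⟨s, hs⟩ := IsAlgClosed.exists_pow_nat_eq (((P ^ 2 - 4 * Q : ℤ) : K)) (n := 2)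
    (by norm_num)
  have hcast : ∀ x : ℤ, ((x : K) = 0 ↔ (p : ℤ) ∣ x) := CharP.intCast_eq_zero_iff K p
  have h2 : (2 : K) ≠ 0 := by
    intro h
    have h2' : ((2 : ℤ) : K) = 0 := by exact_mod_cast h
    have := (hcast 2).mp h2'
    have hple : p ∣ 2 := by exact_mod_cast this
    have := (Nat.prime_dvd_prime_iff_eq hp Nat.prime_two).mp hple
    subst this
    exact (Nat.not_odd_iff_even.mpr (by decide)) hodd
  have hs0 : s ≠ 0 := by
    intro h
    apply hD
    rw [← hcast]
    rw [h] at hs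
    simpa using hs.symm
  obtain ⟨α, β, hsum, hdiff, hprod⟩ :
      ∃ a b : K, a + b = ((P : ℤ) : K) ∧ a - b = s ∧ a * b = ((Q : ℤ) : K) := by
    have hs2 : s ^ 2 = ((P : ℤ) : K) ^ 2 - 4 * ((Q : ℤ) : K) := by
      rw [hs, Int.cast_sub, Int.cast_mul, Int.cast_pow, Int.cast_ofNat]
    have hc : (2 : K) * (2 : K)⁻¹ = 1 := mul_inv_cancel₀ h2
    refine ⟨(((P : ℤ) : K) + s) * (2 : K)⁻¹, (((P : ℤ) : K) - s) * (2 : K)⁻¹, ?_, ?_, ?_⟩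
    · linear_combination ((P : ℤ) : K) * hc
    · linear_combination s * hc
    · linear_combination (-((2 : K)⁻¹ ^ 2)) * hs2 + (((Q : ℤ) : K) * (2 * (2 : K)⁻¹ + 1)) * hc
  have key : ∀ n : ℕ, s * ((lucasU P Q n : ℤ) : K) = α ^ n - β ^ n := by
    intro n
    induction n using Nat.twoStepInduction with
    | zero => simp [lucasU]
    | one =>
      simp only [lucasU, pow_one, Int.cast_one, mul_one]
      exact hdiff.symm
    | more n ih1 ih2 =>
      rw [lucasU_rec]
      rw [Int.cast_sub, Int.cast_mul, Int.cast_mul]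
      rw [← hsum, ← hprod]
      linear_combination (α + β) * ih2 - (α * β) * ih1
  have hiff : ∀ n : ℕ, ((p : ℤ) ∣ lucasU P Q n ↔ α ^ n = β ^ n) := by
    intro n
    constructor
    · intro h
      have h0 : ((lucasU P Q n : ℤ) : K) = 0 := (hcast _).mpr h
      have := key n
      rw [h0, mul_zero] at this
      exact (sub_eq_zero.mp this.symm)
    · intro h
      have h0 : s * ((lucasU P Q n : ℤ) : K) = 0 := by rw [key n, h, sub_self]
      exact (hcast _).mp ((mul_eq_zero.mp h0).resolve_left hs0)
  have hβ0 : β ≠ 0 := by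
    intro h
    apply hQ
    rw [← hcast, ← hprod, h, mul_zero]
  set γ : K := α / β with hγdef
  have hγ : ∀ n : ℕ, (γ ^ n = 1 ↔ α ^ n = β ^ n) := by
    intro n
    rw [hγdef, div_pow, div_eq_one_iff_eq (pow_ne_zero n hβ0)]
  have hz1 : 1 ≤ z := hz.1.1
  have hγz : γ ^ z = 1 := (hγ z).mpr ((hiff z).mp hz.1.2)
  have hfin : IsOfFinOrder γ := isOfFinOrder_iff_pow_eq_one.mpr ⟨z, by omega, hγz⟩
  have hole : orderOf γ ∣ z := orderOf_dvd_of_pow_eq_one hγz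
  have hopos : 0 < orderOf γ := hfin.orderOf_pos
  have hmem : orderOf γ ∈ {n : ℕ | 1 ≤ n ∧ (p : ℤ) ∣ lucasU P Q n} :=
    ⟨hopos, (hiff _).mpr ((hγ _).mp (pow_orderOf_eq_one γ))⟩
  have hoz : orderOf γ = z := le_antisymm (Nat.le_of_dvd (by omega) hole) (hz.2 hmem)
  constructor
  · intro n
    rw [hiff n, ← hγ n, ← hoz, ← orderOf_dvd_iff_pow_eq_one]
  · rintro ⟨m, hm⟩
    have hm1 : 1 ≤ m := by
      rcases Nat.eq_zero_or_pos m with h | h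
      · simp [h] at hm; omega
      · exact h
    have hfrob : (γ ^ m) ^ p = 1 := by
      rw [← pow_mul, Nat.mul_comm, ← hm, hγz]
    have hγm : γ ^ m = 1 := by
      apply frobenius_inj K p
      rw [frobenius_def, frobenius_def, hfrob, one_pow]
    have hmemm : m ∈ {n : ℕ | 1 ≤ n ∧ (p : ℤ) ∣ lucasU P Q n} :=
      ⟨hm1, (hiff m).mpr ((hγ m).mp hγm)⟩
    have := hz.2 hmemm
    have hp2 : 2 ≤ p := hp.two_le
    nlinarith [hm, this, hm1]

lemma lucas_val (p : ℕ) (hp : p.Prime) (hodd : Odd p) (P Q : ℤ)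
    (hQ : ¬ (p : ℤ) ∣ Q)
    (hnd : ∀ n : ℕ, 1 ≤ n → lucasU P Q n ≠ 0) (m : ℕ) (hm : 1 ≤ m)
    (hpUm : (p : ℤ) ∣ lucasU P Q m) :
    (∀ k : ℕ, 1 ≤ k → ¬ p ∣ k →
      padicValInt p (lucasU P Q (k * m)) = padicValInt p (lucasU P Q m)) ∧
    padicValInt p (lucasU P Q (p * m)) = padicValInt p (lucasU P Q m) + 1 := by
  haveI : Fact p.Prime := ⟨hp⟩
  have hpZ : Prime (p : ℤ) := Nat.prime_iff_prime_int.mp hp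
  set U := lucasU P Q m with hUdef
  set V := lucasV P Q m with hVdef
  set f := padicValInt p U with hfdef
  have hUm0 : U ≠ 0 := hnd m hm
  have hf_dvd : (p : ℤ) ^ f ∣ U := padicValInt_dvd U
  have hf1 : 1 ≤ f := by
    have := (padicValInt_dvd_iff 1 U).mp (by simpa using hpUm)
    tauto
  have hf_not : ¬ (p : ℤ) ^ (f + 1) ∣ U := by
    intro h
    have := (padicValInt_dvd_iff (f + 1) U).mp h
    rcases this with h | h
    · exact hUm0 h
    · omega
  clear_value f
  have hp2 : ¬ (p : ℤ) ∣ 2 := by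
    intro h
    have : p ∣ 2 := by exact_mod_cast h
    have := (Nat.prime_dvd_prime_iff_eq hp Nat.prime_two).mp this
    subst this
    exact (Nat.not_odd_iff_even.mpr (by decide)) hodd
  have hpV : ¬ (p : ℤ) ∣ V := by
    intro h
    have hsq := lucasV_sq P Q m
    have h1 : (p : ℤ) ∣ V ^ 2 := dvd_pow h two_ne_zero
    have h2 : (p : ℤ) ∣ (P ^ 2 - 4 * Q) * lucasU P Q m ^ 2 :=
      (dvd_pow hpUm two_ne_zero).mul_left _
    have h3 : (p : ℤ) ∣ 4 * Q ^ m := by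
      have h4 : 4 * Q ^ m = V ^ 2 - (P ^ 2 - 4 * Q) * lucasU P Q m ^ 2 := by
        rw [hsq]; ring
      rw [h4]; exact dvd_sub h1 h2
    rcases hpZ.dvd_mul.mp h3 with h5 | h5
    · have : (p : ℤ) ∣ 2 := by
        have h6 : (4 : ℤ) = 2 ^ 2 := by norm_num
        rw [h6] at h5
        exact hpZ.dvd_of_dvd_pow h5
      exact hp2 this
    · exact hQ (hpZ.dvd_of_dvd_pow h5)
  have hcoV : IsCoprime ((p : ℤ)) V := (hpZ.coprime_iff_not_dvd).mpr hpV
  have hco2 : IsCoprime ((p : ℤ)) 2 := (hpZ.coprime_iff_not_dvd).mpr hp2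
  have hcoU3 : ∀ j : ℕ, j ≤ 3 * f → (p : ℤ) ^ j ∣ U ^ 3 := by
    intro j hj
    have h3 : ((p : ℤ) ^ f) ^ 3 = (p : ℤ) ^ (f * 3) := (pow_mul _ f 3).symm
    have : (p : ℤ) ^ j ∣ ((p : ℤ) ^ f) ^ 3 := by
      rw [h3]; exact pow_dvd_pow _ (by omega)
    exact this.trans (pow_dvd_pow_of_dvd hf_dvd 3)
  constructor
  · intro k hk1 hpk
    obtain ⟨k', rfl⟩ : ∃ k', k = k' + 1 := ⟨k - 1, by omega⟩
    obtain ⟨C, B, hCl, -⟩ := lucasU_claim P Q m k'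
    rw [← hUdef, ← hVdef] at hCl
    set X := lucasU P Q ((k' + 1) * m) with hXdef
    have hXne : X ≠ 0 := hnd _ (Nat.mul_pos (by omega) hm)
    have hcoc : IsCoprime ((p : ℤ)) (V ^ 3 * 2 ^ k') :=
      (hcoV.pow_right).mul_right (hco2.pow_right)
    have hd1 : (p : ℤ) ^ f ∣ V ^ 3 * 2 ^ k' * X := by
      rw [hCl]
      exact dvd_add (hf_dvd.mul_left _) (((hcoU3 f (by omega)).trans (dvd_refl _)).mul_right C)
    have hdX : (p : ℤ) ^ f ∣ X := (hcoc.pow_left).dvd_of_dvd_mul_left hd1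
    have hnX : ¬ (p : ℤ) ^ (f + 1) ∣ X := by
      intro h
      have h1 : (p : ℤ) ^ (f + 1) ∣ V ^ 3 * 2 ^ k' * X := h.mul_left _
      rw [hCl] at h1
      have h2 : (p : ℤ) ^ (f + 1) ∣ U ^ 3 * C := (hcoU3 (f + 1) (by omega)).mul_right C
      have h4 : (p : ℤ) ^ (f + 1) ∣ ((k' : ℤ) + 1) * V ^ (k' + 3) * U := by
        have := dvd_sub h1 h2
        simpa using this
      have hpk' : ¬ (p : ℤ) ∣ ((k' : ℤ) + 1) := by
        intro h5
        apply hpk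
        have : ((p : ℕ) : ℤ) ∣ ((k' + 1 : ℕ) : ℤ) := by push_cast; exact h5
        exact_mod_cast this
      have hcok : IsCoprime ((p : ℤ)) (((k' : ℤ) + 1) * V ^ (k' + 3)) :=
        ((hpZ.coprime_iff_not_dvd).mpr hpk').mul_right (hcoV.pow_right)
      exact hf_not ((hcok.pow_left).dvd_of_dvd_mul_left h4)
    have hle : f ≤ padicValInt p X := ((padicValInt_dvd_iff f X).mp hdX).resolve_left hXne
    have hlt : ¬ (f + 1 ≤ padicValInt p X) := fun hcon =>
      hnX ((padicValInt_dvd_iff (f + 1) X).mpr (Or.inr hcon))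
    omega
  · obtain ⟨C, B, hCl, -⟩ := lucasU_claim P Q m (p - 1)
    rw [← hUdef, ← hVdef] at hCl
    have ep : p - 1 + 1 = p := Nat.succ_pred_eq_of_pos hp.pos
    have hc2 : ((p - 1 : ℕ) : ℤ) + 1 = (p : ℤ) := by
      have := hp.two_le; omega
    rw [ep, hc2] at hCl
    rw [mul_assoc ((p : ℕ) : ℤ)] at hCl
    set X := lucasU P Q (p * m) with hXdef
    have hXne : X ≠ 0 := hnd _ (Nat.mul_pos hp.pos hm)
    have hcoc : IsCoprime ((p : ℤ)) (V ^ 3 * 2 ^ (p - 1)) :=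
      (hcoV.pow_right).mul_right (hco2.pow_right)
    have hd1 : (p : ℤ) ^ (f + 1) ∣ V ^ 3 * 2 ^ (p - 1) * X := by
      rw [hCl]
      apply dvd_add
      · rw [pow_succ']
        exact mul_dvd_mul (dvd_refl _) (hf_dvd.mul_left _)
      · exact (hcoU3 (f + 1) (by omega)).mul_right C
    have hdX : (p : ℤ) ^ (f + 1) ∣ X := (hcoc.pow_left).dvd_of_dvd_mul_left hd1
    have hnX : ¬ (p : ℤ) ^ (f + 2) ∣ X := by
      intro h
      have h1 : (p : ℤ) ^ (f + 2) ∣ V ^ 3 * 2 ^ (p - 1) * X := h.mul_left _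
      rw [hCl] at h1
      have h2 : (p : ℤ) ^ (f + 2) ∣ U ^ 3 * C := (hcoU3 (f + 2) (by omega)).mul_right C
      have h4 : (p : ℤ) ^ (f + 2) ∣ (p : ℤ) * (V ^ (p - 1 + 3) * U) := by
        have := dvd_sub h1 h2
        simpa using this
      have h5 : (p : ℤ) ^ (f + 1) ∣ V ^ (p - 1 + 3) * U := by
        have he : (p : ℤ) ^ (f + 2) = (p : ℤ) * (p : ℤ) ^ (f + 1) := by rw [← pow_succ']
        rw [he] at h4
        exact (mul_dvd_mul_iff_left (show (p : ℤ) ≠ 0 by exact_mod_cast hp.ne_zero)).mp h4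
      exact hf_not ((hcoV.pow_right.pow_left).dvd_of_dvd_mul_left h5)
    have hle : f + 1 ≤ padicValInt p X := ((padicValInt_dvd_iff (f + 1) X).mp hdX).resolve_left hXne
    have hlt : ¬ (f + 2 ≤ padicValInt p X) := fun hcon =>
      hnX ((padicValInt_dvd_iff (f + 2) X).mpr (Or.inr hcon))
    omega

theorem vp_lucasU_of_not_dvd_QD (p : ℕ) (hp : p.Prime) (hodd : Odd p)
    (P Q : ℤ) (hP : P ≠ 0) (hQ : Q ≠ 0)
    (hpQD : ¬ (p : ℤ) ∣ Q * (P ^ 2 - 4 * Q))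
    (hnd : ∀ n : ℕ, 1 ≤ n → lucasU P Q n ≠ 0)
    (z : ℕ) (hz : IsLeast {n : ℕ | 1 ≤ n ∧ (p : ℤ) ∣ lucasU P Q n} z) :
    ∀ n : ℕ, 1 ≤ n →
      (¬ z ∣ n → padicValInt p (lucasU P Q n) = 0) ∧
      (z ∣ n → ¬ p ∣ n →
        padicValInt p (lucasU P Q n) = padicValInt p (lucasU P Q z)) ∧
      (z ∣ n → p ∣ n →
        (padicValInt p (lucasU P Q n) : ℤ) =
          (padicValInt p (lucasU P Q (p * z)) : ℤ) + (padicValNat p n : ℤ) - 1) := by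
  haveI : Fact p.Prime := ⟨hp⟩
  have hpQ : ¬ (p : ℤ) ∣ Q := fun h => hpQD (h.mul_right _)
  have hpD : ¬ (p : ℤ) ∣ (P ^ 2 - 4 * Q) := fun h => hpQD (h.mul_left Q)
  obtain ⟨hiff, hpz⟩ := lucas_rank p hp hodd P Q hpQ hpD z hz
  have hz1 : 1 ≤ z := hz.1.1
  set e := padicValInt p (lucasU P Q z) with hedef
  -- chain lemma
  have chain : ∀ j : ℕ, padicValInt p (lucasU P Q (p ^ j * z)) = e + j := by
    intro j
    induction j with
    | zero => simp [hedef]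
    | succ j ih =>
      have hdv : (p : ℤ) ∣ lucasU P Q (p ^ j * z) := (hiff _).mpr (dvd_mul_left z _)
      have hm1 : 1 ≤ p ^ j * z := Nat.mul_pos (pow_pos hp.pos j) hz1
      have hstep := (lucas_val p hp hodd P Q hpQ hnd (p ^ j * z) hm1 hdv).2
      have e2 : p * (p ^ j * z) = p ^ (j + 1) * z := by ring
      rw [e2, ih] at hstep
      omega
  have master : ∀ n : ℕ, 1 ≤ n → z ∣ n →
      padicValInt p (lucasU P Q n) = e + padicValNat p n := by
    intro n hn hzn
    have hn0 : n ≠ 0 := by omega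
    set t := n.factorization p with ht
    have hfact : p ^ t * ordCompl[p] n = n := Nat.ordProj_mul_ordCompl_eq_self n p
    have hpc : ¬ p ∣ ordCompl[p] n := Nat.not_dvd_ordCompl hp hn0
    have hzc : z ∣ ordCompl[p] n * p ^ t := by
      rw [Nat.mul_comm, hfact]; exact hzn
    have hcozp : Nat.Coprime z (p ^ t) :=
      (Nat.coprime_comm.mp ((hp.coprime_iff_not_dvd).mpr hpz)).pow_right t
    obtain ⟨s, hsx⟩ := hcozp.dvd_of_dvd_mul_right hzc
    have hps : ¬ p ∣ s := fun h => hpc (hsx ▸ (h.mul_left z))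
    have hs0 : 1 ≤ s := by
      rcases Nat.eq_zero_or_pos s with h | h
      · exfalso
        have : ordCompl[p] n = 0 := by rw [hsx, h, Nat.mul_zero]
        have := Nat.ordCompl_pos p hn0
        omega
      · exact h
    have hdvt : (p : ℤ) ∣ lucasU P Q (p ^ t * z) := (hiff _).mpr (dvd_mul_left z _)
    have hmt1 : 1 ≤ p ^ t * z := Nat.mul_pos (pow_pos hp.pos t) hz1
    have hval := (lucas_val p hp hodd P Q hpQ hnd (p ^ t * z) hmt1 hdvt).1 s hs0 hps
    have e3 : s * (p ^ t * z) = n := by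
      rw [← hfact, hsx]; ring
    rw [e3, chain t] at hval
    rw [hval, ht, Nat.factorization_def n hp]
  intro n hn
  refine ⟨?_, ?_, ?_⟩
  · intro h
    exact padicValInt.eq_zero_of_not_dvd (fun hd => h ((hiff n).mp hd))
  · intro h1 h2
    rw [master n hn h1, padicValNat.eq_zero_of_not_dvd h2]
    omega
  · intro h1 h2
    have hpz1 : padicValInt p (lucasU P Q (p * z)) = e + 1 := by
      have h3 := master (p * z) (Nat.mul_pos hp.pos hz1) (dvd_mul_left z p)
      have h4 : padicValNat p (p * z) = 1 := by
        rw [padicValNat.mul hp.ne_zero (by omega), padicValNat.self hp.one_lt,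
          padicValNat.eq_zero_of_not_dvd hpz]
      rw [h3, h4]
    have h5 : 1 ≤ padicValNat p n := by
      rcases h2 with ⟨c, rfl⟩
      have hc0 : c ≠ 0 := by
        rintro rfl; omega
      rw [padicValNat.mul hp.ne_zero hc0, padicValNat.self hp.one_lt]
      omega
    rw [master n hn h1, hpz1]
    push_cast
    ring
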